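/- Fix c ∈ ℂ. In the field of rational functions in the variables u_ℓ (ℓ ∈ ℤ) with shift S, let D̃_t be the total derivative for the modified Narita–Itoh–Bogoyavlensky equation ∂_t(u) = u_0(u_0 + c)(u_2 u_1 − u_{−1} u_{−2}). Then Φ := (u_2 + c) u_1 u_0 satisfies D̃_t(Φ) = Φ·( S²(Φ) + S(Φ) − S^{-1}(Φ) − S^{-2}(Φ) ); that is, b = (u_2 + c) u_1 u_0 is a Miura-type transformation from the modified Narita–Itoh–Bogoyavlensky equation to the Narita–Itoh–Bogoyavlensky equation ∂_t(b) = b(b_2 + b_1 − b_{−1} − b_{−2}). -/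

import Mathlib

/-!
Expanding `D̃_t(Φ)` by the Leibniz rule and substituting the modified equation gives a polynomial
in `u_{-2}, …, u_4` and `c` which coincides identically with `Φ · (S²Φ + SΦ − S⁻¹Φ − S⁻²Φ)`
once the shifts are computed from `S^n u_ℓ = u_{ℓ+n}` and `S^n c = c`. So the identity holds
for any derivation of a commutative algebra along which a family `u : ℤ → A` obeys the
modified equation.
-/

noncomputable section

open MvPolynomial

abbrev R1 : Type := MvPolynomial ℤ ℂ
abbrev K1 : Type := FractionRing R1

def u (ℓ : ℤ) : K1 := algebraMap R1 K1 (X ℓ)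

def S1 : RingAut K1 :=
  IsFractionRing.ringEquivOfRingEquiv
    ((renameEquiv ℂ (Equiv.addRight (1:ℤ))).toRingEquiv)

def Sz (ℓ : ℤ) : K1 ≃+* K1 := S1 ^ ℓ

def nibMiura {A : Type*} [CommRing A] (u : ℤ → A) (c : A) (n : ℤ) : A :=
  (u (n + 2) + c) * u (n + 1) * u n

theorem Derivation.nibMiura_zero {R A : Type*} [CommRing R] [CommRing A] [Algebra R A]
    (D : Derivation R A A) (u : ℤ → A) (c : R)
    (hD : ∀ ℓ, D (u ℓ) = u ℓ * (u ℓ + algebraMap R A c) *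
      (u (ℓ + 2) * u (ℓ + 1) - u (ℓ - 1) * u (ℓ - 2))) :
    D (nibMiura u (algebraMap R A c) 0) =
      nibMiura u (algebraMap R A c) 0 *
        (nibMiura u (algebraMap R A c) 2 + nibMiura u (algebraMap R A c) 1 -
          nibMiura u (algebraMap R A c) (-1) - nibMiura u (algebraMap R A c) (-2)) := by
  simp only [nibMiura, Derivation.leibniz, map_add, Derivation.map_algebraMap, add_zero,
    smul_eq_mul, hD]
  ring_nf

theorem S1_algebraMap (p : R1) :
    S1 (algebraMap R1 K1 p) = algebraMap R1 K1 (rename (· + 1) p) := by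
  simp [S1]

theorem S1_symm_algebraMap (p : R1) :
    S1.symm (algebraMap R1 K1 p) = algebraMap R1 K1 (rename (· - 1) p) := by
  rw [RingEquiv.symm_apply_eq, S1_algebraMap, rename_rename]
  have : ((· + 1) ∘ (· - 1) : ℤ → ℤ) = id := funext (sub_add_cancel · 1)
  rw [this, rename_id_apply]

theorem Sz_algebraMap (n : ℤ) (p : R1) :
    Sz n (algebraMap R1 K1 p) = algebraMap R1 K1 (rename (· + n) p) := by
  induction n using Int.induction_on generalizing p with
  | zero =>
    simp only [Sz, zpow_zero, RingAut.one_apply, add_zero]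
    exact congrArg _ (rename_id_apply p).symm
  | succ m ih =>
    rw [Sz, zpow_add_one, RingAut.mul_apply, S1_algebraMap, ← Sz, ih, rename_rename]
    congr 3
    exact funext fun x ↦ by simp only [Function.comp_apply]; ring
  | pred m ih =>
    rw [Sz, zpow_sub_one, RingAut.mul_apply, RingAut.inv_apply, S1_symm_algebraMap, ← Sz, ih,
      rename_rename]
    congr 3
    exact funext fun x ↦ by simp only [Function.comp_apply]; ring

theorem Sz_u (n ℓ : ℤ) : Sz n (u ℓ) = u (ℓ + n) := by
  rw [u, Sz_algebraMap, rename_X, u]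

theorem Sz_algebraMap_complex (n : ℤ) (c : ℂ) :
    Sz n (algebraMap ℂ K1 c) = algebraMap ℂ K1 c := by
  rw [IsScalarTower.algebraMap_apply ℂ R1 K1, Sz_algebraMap, algebraMap_eq, rename_C]

theorem Sz_nibMiura (n : ℤ) (c : ℂ) :
    Sz n (nibMiura u (algebraMap ℂ K1 c) 0) = nibMiura u (algebraMap ℂ K1 c) n := by
  simp only [nibMiura, map_mul, map_add, Sz_u, Sz_algebraMap_complex]
  ring_nf

/-- `Φ = (u_2 + c) u_1 u_0` is a Miura-type transformation from
the modified Narita–Itoh–Bogoyavlensky equation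
`∂ₜ(u) = u_0(u_0 + c)(u_2 u_1 − u_{−1} u_{−2})` to the
Narita–Itoh–Bogoyavlensky equation `∂ₜ(b) = b(b_2 + b_1 − b_{−1} − b_{−2})`,
i.e. `D̃_t(Φ) = Φ·(S²(Φ) + S(Φ) − S⁻¹(Φ) − S⁻²(Φ))`. -/
theorem statement11 (c : ℂ)
    -- the total derivative `D̃_t` for the modified NIB equation:
    (Dt : Derivation ℂ K1 K1)
    (hDtu : ∀ ℓ : ℤ,
      Dt (u ℓ) = Sz ℓ (u 0 * (u 0 + algebraMap ℂ K1 c) * (u 2 * u 1 - u (-1) * u (-2)))) :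
    Dt ((u 2 + algebraMap ℂ K1 c) * u 1 * u 0) =
      (u 2 + algebraMap ℂ K1 c) * u 1 * u 0 *
        (Sz 2 ((u 2 + algebraMap ℂ K1 c) * u 1 * u 0) +
          Sz 1 ((u 2 + algebraMap ℂ K1 c) * u 1 * u 0) -
          Sz (-1) ((u 2 + algebraMap ℂ K1 c) * u 1 * u 0) -
          Sz (-2) ((u 2 + algebraMap ℂ K1 c) * u 1 * u 0)) := by
  have hmodNIB : ∀ ℓ, Dt (u ℓ) = u ℓ * (u ℓ + algebraMap ℂ K1 c) *
      (u (ℓ + 2) * u (ℓ + 1) - u (ℓ - 1) * u (ℓ - 2)) := by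
    intro ℓ
    simp only [hDtu, map_mul, map_add, map_sub, Sz_u, Sz_algebraMap_complex]
    ring_nf
  have hΦ : (u 2 + algebraMap ℂ K1 c) * u 1 * u 0 = nibMiura u (algebraMap ℂ K1 c) 0 := by
    simp only [nibMiura, zero_add]
  simpa only [hΦ, Sz_nibMiura] using Dt.nibMiura_zero u c hmodNIB
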